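/- arXiv:2604.07954 — 2 statements merged into one kernel-verified Lean document; each statement's English description precedes it below -/
import Mathlib

section
/- Let $\phi, \psi$ be real-valued functions on $\{-1,1\}^R$ and $\{-1,1\}^N$ respectively with $\|\phi\|_1 = \|\psi\|_1 = 1$, and suppose $\psi$ has pure high degree at least $1$ (i.e., $\sum_x \psi(x) = 0$). Then the dual block composition $(\phi \star \psi)(x_1,\dots,x_R) = 2^R \phi(\mathrm{sgn}(\psi(x_1)),\dots,\mathrm{sgn}(\psi(x_R)))\prod_{r=1}^R |\psi(x_r)|$ satisfies $\|\phi \star \psi\|_1 = 1$. -/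
/-- The dual block composition `(φ ⋆ ψ)(x₁,…,x_R) =
`2^R φ(sgn ψ(x₁),…,sgn ψ(x_R)) ∏_r |ψ(x_r)|`, with the hypercube `{-1,1}` encoded by
`Bool` (`true ↔ 1`, `false ↔ -1`) and `sgn z = 1 ↔ 0 ≤ z`. -/
noncomputable def dualBlock {R N : ℕ} (φ : (Fin R → Bool) → ℝ)
    (ψ : (Fin N → Bool) → ℝ) (x : Fin R × Fin N → Bool) : ℝ :=
  2 ^ R * φ (fun r => decide (0 ≤ ψ (fun j => x (r, j))))
    * ∏ r : Fin R, |ψ (fun j => x (r, j))|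

/-- Preservation of the `ℓ₁` norm: if `‖φ‖₁ = ‖ψ‖₁ = 1` and `ψ` has pure high degree
at least `1` (i.e. `∑ₓ ψ(x) = 0`), then `‖φ ⋆ ψ‖₁ = 1`. -/
theorem dualBlock_l1_norm {R N : ℕ} (φ : (Fin R → Bool) → ℝ)
    (ψ : (Fin N → Bool) → ℝ)
    (hφ : ∑ z : Fin R → Bool, |φ z| = 1)
    (hψ : ∑ x : Fin N → Bool, |ψ x| = 1)
    (hphd : ∑ x : Fin N → Bool, ψ x = 0) :
    ∑ x : Fin R × Fin N → Bool, |dualBlock φ ψ x| = 1 := by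
  classical
  set σ : (Fin N → Bool) → Bool := fun v => decide (0 ≤ ψ v) with hσ
  set g : (Fin N → Bool) → ℝ := fun v => |ψ v| with hg
  -- each sign class has mass 1/2
  have hhalf : ∀ b : Bool, (∑ v : Fin N → Bool, if σ v = b then g v else 0) = 1 / 2 := by
    have hA : (∑ v : Fin N → Bool, if σ v = true then g v else 0)
        + (∑ v : Fin N → Bool, if σ v = false then g v else 0) = 1 := by
      rw [← Finset.sum_add_distrib, ← hψ]
      refine Finset.sum_congr rfl fun v _ => ?_
      cases h : σ v <;> simp [hg]
    have hB : (∑ v : Fin N → Bool, if σ v = true then g v else 0)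
        - (∑ v : Fin N → Bool, if σ v = false then g v else 0) = 0 := by
      have : (∑ v : Fin N → Bool, if σ v = true then g v else 0)
          - (∑ v : Fin N → Bool, if σ v = false then g v else 0)
          = ∑ v : Fin N → Bool, ψ v := by
        rw [← Finset.sum_sub_distrib]
        refine Finset.sum_congr rfl fun v _ => ?_
        by_cases h : 0 ≤ ψ v
        · simp [hσ, hg, h, abs_of_nonneg h]
        · simp [hσ, hg, h, abs_of_neg (lt_of_not_ge h)]
      rw [this, hphd]
    intro b
    cases b <;> linarith
  -- reindex by currying
  have hcurry : ∑ x : Fin R × Fin N → Bool, |dualBlock φ ψ x|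
      = ∑ y : Fin R → Fin N → Bool,
          (2 : ℝ) ^ R * |φ (fun r => σ (y r))| * ∏ r : Fin R, g (y r) := by
    rw [← Equiv.sum_comp (Equiv.curry (Fin R) (Fin N) Bool)
      (fun y => (2 : ℝ) ^ R * |φ (fun r => σ (y r))| * ∏ r : Fin R, g (y r))]
    refine Finset.sum_congr rfl fun x _ => ?_
    simp only [Equiv.curry_apply, Function.curry]
    rw [dualBlock, abs_mul, abs_mul, abs_of_nonneg (by positivity : (0:ℝ) ≤ 2 ^ R),
      abs_of_nonneg (show (0:ℝ) ≤ ∏ r : Fin R, |ψ fun j => x (r, j)| from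
        Finset.prod_nonneg fun r _ => abs_nonneg _)]
    rfl
  rw [hcurry]
  -- group by sign pattern
  have hfib : ∑ y : Fin R → Fin N → Bool,
      (2 : ℝ) ^ R * |φ (fun r => σ (y r))| * ∏ r : Fin R, g (y r)
      = ∑ z : Fin R → Bool, ∑ y : Fin R → Fin N → Bool,
          (2 : ℝ) ^ R * |φ z| * ∏ r : Fin R, (if σ (y r) = z r then g (y r) else 0) := by
    rw [Finset.sum_comm]
    refine Finset.sum_congr rfl fun y _ => ?_
    rw [Finset.sum_eq_single (fun r => σ (y r))]
    · congr 1
      refine Finset.prod_congr rfl fun r _ => by simp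
    · intro z _ hz
      obtain ⟨r, hr⟩ := Function.ne_iff.mp hz
      have : (∏ r : Fin R, if σ (y r) = z r then g (y r) else 0) = 0 :=
        Finset.prod_eq_zero (Finset.mem_univ r) (if_neg fun h => hr h.symm)
      rw [this, mul_zero]
    · simp
  rw [hfib]
  have key : ∀ z : Fin R → Bool, ∑ y : Fin R → Fin N → Bool,
      ∏ r : Fin R, (if σ (y r) = z r then g (y r) else 0) = (1/2 : ℝ) ^ R := by
    intro z
    rw [← Fintype.prod_sum (κ := fun _ : Fin R => Fin N → Bool)
      (fun r v => if σ v = z r then g v else 0)]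
    rw [Finset.prod_congr rfl fun r _ => hhalf (z r), Finset.prod_const,
      Finset.card_univ, Fintype.card_fin]
  calc ∑ z : Fin R → Bool, ∑ y : Fin R → Fin N → Bool,
        (2 : ℝ) ^ R * |φ z| * ∏ r : Fin R, (if σ (y r) = z r then g (y r) else 0)
      = ∑ z : Fin R → Bool, (2 : ℝ) ^ R * |φ z| * (1/2 : ℝ) ^ R := by
        refine Finset.sum_congr rfl fun z _ => ?_
        rw [← Finset.mul_sum, key z]
    _ = 1 := by
        rw [← Finset.sum_mul]
        rw [show ∑ z : Fin R → Bool, (2:ℝ)^R * |φ z| = 2^R * ∑ z : Fin R → Bool, |φ z| from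
          (Finset.mul_sum _ _ _).symm, hφ, mul_one]
        rw [div_pow, one_pow, mul_one_div, div_self (by positivity)]
end

section
/- Let $\phi : \{-1,1\}^R \to \mathbb{R}$ and $\psi : \{-1,1\}^N \to \mathbb{R}$ have pure high degrees at least $D_\phi$ and $D_\psi$ respectively. Then the dual block composition $\phi \star \psi$ has pure high degree at least $D_\phi \cdot D_\psi$. -/
/-- A function on the Boolean hypercube (with `{-1,1}` encoded by `Bool`,
`true ↔ 1`, `false ↔ -1`) has pure high degree at least `Δ` if it is orthogonal to
every monomial (hence every polynomial) of degree `< Δ`. -/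
def PureHighDegreeGE {ι : Type*} [Fintype ι] [DecidableEq ι]
    (f : (ι → Bool) → ℝ) (Δ : ℕ) : Prop :=
  ∀ S : Finset ι, S.card < Δ →
    ∑ x : ι → Bool, f x * ∏ i ∈ S, (if x i then (1 : ℝ) else -1) = 0

namespace DBP

noncomputable def eps (b : Bool) : ℝ := if b then 1 else -1

lemma eps_sign (y : ℝ) : y = eps (decide (0 ≤ y)) * |y| := by
  by_cases h : 0 ≤ y
  · simp [eps, h, abs_of_nonneg h]
  · simp [eps, h, abs_of_neg (lt_of_not_ge h)]

lemma one_add_eps_mul (s z : Bool) :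
    (1 : ℝ) + eps s * eps z = if z = s then 2 else 0 := by
  cases s <;> cases z <;> norm_num [eps]

lemma delta_prod {R : ℕ} (s z : Fin R → Bool) :
    ∏ r : Fin R, ((1 : ℝ) + eps (s r) * eps (z r)) = if z = s then 2 ^ R else 0 := by
  by_cases h : z = s
  · subst h; simp [one_add_eps_mul]
  · obtain ⟨r, hr⟩ := Function.ne_iff.mp h
    rw [if_neg h]
    exact Finset.prod_eq_zero (Finset.mem_univ r) (by rw [one_add_eps_mul, if_neg hr])

lemma dualBlock_expand {R N : ℕ} (φ : (Fin R → Bool) → ℝ)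
    (ψ : (Fin N → Bool) → ℝ) (x : Fin R × Fin N → Bool) :
    dualBlock φ ψ x = ∑ z : Fin R → Bool,
      φ z * ∏ r : Fin R,
        (|ψ (fun j => x (r, j))| + eps (z r) * ψ (fun j => x (r, j))) := by
  set s : Fin R → Bool := fun r => decide (0 ≤ ψ (fun j => x (r, j))) with hs
  have key : ∀ z : Fin R → Bool, ∀ r : Fin R,
      |ψ (fun j => x (r, j))| + eps (z r) * ψ (fun j => x (r, j))
        = ((1 : ℝ) + eps (s r) * eps (z r)) * |ψ (fun j => x (r, j))| := by
    intro z r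
    have := eps_sign (ψ (fun j => x (r, j)))
    rw [hs]
    nth_rewrite 2 [this]
    ring
  calc dualBlock φ ψ x
      = ∑ z : Fin R → Bool, φ z * ((if z = s then (2:ℝ) ^ R else 0) *
          ∏ r : Fin R, |ψ (fun j => x (r, j))|) := by
        rw [Finset.sum_eq_single s]
        · rw [if_pos rfl]; simp only [dualBlock, hs]; ring
        · intro z _ hz; simp [hz]
        · intro h; exact absurd (Finset.mem_univ s) h
    _ = _ := by
        refine Finset.sum_congr rfl fun z _ => ?_
        rw [← delta_prod s z, ← Finset.prod_mul_distrib]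
        congr 1
        exact Finset.prod_congr rfl fun r _ => (key z r).symm

end DBP

open DBP

/-- Multiplicativity of pure high degree under dual block composition: if `φ` has
pure high degree at least `D_φ` and `ψ` at least `D_ψ`, then `φ ⋆ ψ` has pure high
degree at least `D_φ · D_ψ`. -/
theorem dualBlock_pure_high_degree {R N : ℕ} (φ : (Fin R → Bool) → ℝ)
    (ψ : (Fin N → Bool) → ℝ) (Dφ Dψ : ℕ)
    (hφ : PureHighDegreeGE φ Dφ) (hψ : PureHighDegreeGE ψ Dψ) :
    PureHighDegreeGE (dualBlock φ ψ) (Dφ * Dψ) := by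
  intro S hS
  classical
  set Sr : Fin R → Finset (Fin N) := fun r => Finset.univ.filter (fun j => (r, j) ∈ S) with hSr
  -- fiberwise product over S
  have fiber_prod : ∀ (f : Fin R × Fin N → ℝ),
      (∏ p ∈ S, f p) = ∏ r : Fin R, ∏ j ∈ Sr r, f (r, j) := by
    intro f
    rw [← Finset.prod_fiberwise_of_maps_to (g := Prod.fst) (t := Finset.univ)
      (fun p _ => Finset.mem_univ p.1) f]
    refine Finset.prod_congr rfl fun r _ => ?_
    refine (Finset.prod_bij' (fun p _ => p.2) (fun j _ => (r, j)) ?_ ?_ ?_ ?_ ?_)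
    · intro p hp
      simp only [Finset.mem_filter] at hp
      obtain ⟨h1, h2⟩ := hp
      simp only [hSr, Finset.mem_filter, Finset.mem_univ, true_and]
      rwa [← h2, Prod.mk.eta]
    · intro j hj
      simp only [hSr, Finset.mem_filter, Finset.mem_univ, true_and] at hj
      simp [hj]
    · rintro ⟨p1, p2⟩ hp
      simp only [Finset.mem_filter] at hp
      obtain ⟨h1, rfl⟩ := hp
      rfl
    · intro j _; rfl
    · rintro ⟨p1, p2⟩ hp
      simp only [Finset.mem_filter] at hp
      obtain ⟨h1, rfl⟩ := hp
      rfl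
  have fiber_card : ∀ r : Fin R, (S.filter (fun p => p.1 = r)).card = (Sr r).card := by
    intro r
    refine Finset.card_bij' (fun p _ => p.2) (fun j _ => (r, j)) ?_ ?_ ?_ ?_
    · intro p hp
      simp only [Finset.mem_filter] at hp
      obtain ⟨h1, h2⟩ := hp
      simp only [hSr, Finset.mem_filter, Finset.mem_univ, true_and]
      rwa [← h2, Prod.mk.eta]
    · intro j hj
      simp only [hSr, Finset.mem_filter, Finset.mem_univ, true_and] at hj
      simp [hj]
    · rintro ⟨p1, p2⟩ hp
      simp only [Finset.mem_filter] at hp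
      obtain ⟨h1, rfl⟩ := hp
      rfl
    · intro j _; rfl
  have chi_fact : ∀ x : Fin R × Fin N → Bool,
      (∏ p ∈ S, (if x p then (1:ℝ) else -1))
        = ∏ r : Fin R, ∏ j ∈ Sr r, eps (x (r, j)) :=
    fun x => fiber_prod (fun p => if x p then (1:ℝ) else -1)
  set A : Fin R → ℝ := fun r => ∑ y : Fin N → Bool, |ψ y| * ∏ j ∈ Sr r, eps (y j) with hAdef
  set B : Fin R → ℝ := fun r => ∑ y : Fin N → Bool, ψ y * ∏ j ∈ Sr r, eps (y j) with hBdef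
  have key : ∀ z : Fin R → Bool,
      (∑ x : Fin R × Fin N → Bool,
        (∏ r : Fin R, (|ψ (fun j => x (r, j))| + eps (z r) * ψ (fun j => x (r, j))))
          * ∏ r : Fin R, ∏ j ∈ Sr r, eps (x (r, j)))
      = ∏ r : Fin R, (A r + eps (z r) * B r) := by
    intro z
    have h1 : ∀ r : Fin R, A r + eps (z r) * B r
        = ∑ y : Fin N → Bool, (|ψ y| + eps (z r) * ψ y) * ∏ j ∈ Sr r, eps (y j) := by
      intro r
      rw [hAdef, hBdef, Finset.mul_sum, ← Finset.sum_add_distrib]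
      exact Finset.sum_congr rfl fun y _ => by ring
    rw [Finset.prod_congr rfl fun r _ => h1 r, Finset.prod_univ_sum,
      Fintype.piFinset_univ]
    refine Eq.trans (Finset.sum_congr rfl fun x _ => (Finset.prod_mul_distrib).symm) ?_
    exact Fintype.sum_equiv (Equiv.curry (Fin R) (Fin N) Bool) _ _ (fun x => rfl)
  have step1 : (∑ x : Fin R × Fin N → Bool,
        dualBlock φ ψ x * ∏ i ∈ S, (if x i then (1:ℝ) else -1))
      = ∑ z : Fin R → Bool, φ z * ∏ r : Fin R, (A r + eps (z r) * B r) := by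
    rw [Finset.sum_congr rfl fun x _ => by
      rw [dualBlock_expand φ ψ x, chi_fact x, Finset.sum_mul]]
    rw [Finset.sum_comm]
    refine Finset.sum_congr rfl fun z _ => ?_
    rw [← key z, Finset.mul_sum]
    exact Finset.sum_congr rfl fun x _ => by ring
  rw [step1]
  -- expand the product
  have step2 : ∀ z : Fin R → Bool,
      (∏ r : Fin R, (A r + eps (z r) * B r))
        = ∑ U ∈ (Finset.univ : Finset (Fin R)).powerset,
            (∏ r ∈ U, eps (z r)) * ((∏ r ∈ U, B r) * ∏ r ∈ Finset.univ \ U, A r) := by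
    intro z
    rw [Finset.prod_congr rfl fun r _ => add_comm (A r) (eps (z r) * B r),
      Finset.prod_add]
    exact Finset.sum_congr rfl fun U _ => by
      rw [Finset.prod_mul_distrib]; ring
  rw [Finset.sum_congr rfl fun z _ => by rw [step2 z, Finset.mul_sum], Finset.sum_comm]
  refine Finset.sum_eq_zero fun U _ => ?_
  by_cases hU : U.card < Dφ
  · have h0 := hφ U hU
    have : (∑ z : Fin R → Bool, φ z * ∏ r ∈ U, eps (z r)) = 0 := by
      simpa [eps] using h0
    calc (∑ z : Fin R → Bool, φ z * ((∏ r ∈ U, eps (z r))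
            * ((∏ r ∈ U, B r) * ∏ r ∈ Finset.univ \ U, A r)))
        = ((∏ r ∈ U, B r) * ∏ r ∈ Finset.univ \ U, A r)
            * ∑ z : Fin R → Bool, φ z * ∏ r ∈ U, eps (z r) := by
          rw [Finset.mul_sum]
          exact Finset.sum_congr rfl fun z _ => by ring
      _ = 0 := by rw [this, mul_zero]
  · push_neg at hU
    have hex : ∃ r ∈ U, (Sr r).card < Dψ := by
      by_contra hcon
      push_neg at hcon
      have hcard : S.card = ∑ r : Fin R, (Sr r).card := by
        rw [Finset.card_eq_sum_card_fiberwise (f := Prod.fst) (t := Finset.univ)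
          (fun p _ => Finset.mem_univ p.1)]
        exact Finset.sum_congr rfl fun r _ => fiber_card r
      have h2 : U.card * Dψ ≤ ∑ r ∈ U, (Sr r).card := by
        rw [Finset.card_eq_sum_ones U, Finset.sum_mul]
        simpa using Finset.sum_le_sum hcon
      have h3 : (∑ r ∈ U, (Sr r).card) ≤ ∑ r : Fin R, (Sr r).card :=
        Finset.sum_le_sum_of_subset (Finset.subset_univ U)
      have h4 : Dφ * Dψ ≤ U.card * Dψ := Nat.mul_le_mul_right Dψ hU
      omega
    obtain ⟨r0, hr0U, hr0⟩ := hex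
    have hB0 : B r0 = 0 := by
      have := hψ (Sr r0) hr0
      simpa [hBdef, eps] using this
    refine Finset.sum_eq_zero fun z _ => ?_
    rw [Finset.prod_eq_zero hr0U hB0, zero_mul, mul_zero, mul_zero]
end
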